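/- Suppose γ_s ≤ 1/6 for all s. Then the Widom factors satisfy: (a) liminf_{s→∞} W_{2^s} = liminf_{n→∞} W_n (indeed min{W_n : 2^s ≤ n < 2^{s+1}} = W_{2^s} for every s); and (b) limsup_{n→∞} W_n = ∞. -/

import Mathlib

open Polynomial MeasureTheory Filter

/-- `r γ s` : the recursively defined scales `r 0 = 1`, `r (s+1) = γ (s+1) * (r s)²`. -/
noncomputable def r (γ : ℕ → ℝ) : ℕ → ℝ
  | 0 => 1
  | s + 1 => γ (s + 1) * (r γ s) ^ 2

/-- `P γ s` : the polynomial `P_{2^s}`, with `P_1 = X - 1` and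
`P_{2^{s+1}} = P_{2^s} · (P_{2^s} + r_s)`. -/
noncomputable def P (γ : ℕ → ℝ) : ℕ → Polynomial ℝ
  | 0 => X - 1
  | s + 1 => P γ s * (P γ s + C (r γ s))

/-- The integral `∫ f dν_s` of a function `f` against the normalized counting measure `ν_s`
on the `2^s` (simple, real) zeros of `P_{2^s} + r_s/2`. -/
noncomputable def nuInt (γ : ℕ → ℝ) (s : ℕ) (f : ℝ → ℝ) : ℝ :=
  (((P γ s + C (r γ s / 2)).roots.map f).sum) / 2 ^ s

/-- The Widom factors `W_n = ‖Q_n‖ / C^n`, where `‖f‖ = (∫ f² dμ)^{1/2}` and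
`C = exp(Σ_{k=1}^∞ 2^{-k} log γ_k)` is the logarithmic capacity of `K(γ)`. -/
noncomputable def widomW (γ : ℕ → ℝ) (μ : MeasureTheory.Measure ℝ)
    (Q : ℕ → Polynomial ℝ) (n : ℕ) : ℝ :=
  Real.sqrt (∫ x, ((Q n).eval x) ^ 2 ∂μ) /
    (Real.exp (∑' k : ℕ, (1 / 2 : ℝ) ^ (k + 1) * Real.log (γ (k + 1)))) ^ n

/-!
Write `F x = 1 + (x² - x) / γ₁` and `γ'` for the shifted sequence `k ↦ γ (k + 1)`. Then
`P_{2^{s+1}} = γ₁^{2^s} · P'_{2^s} ∘ F`, so the zeros defining `ν_{s+1}` are the two preimages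
`a, 1 - a` under `F` of those defining `ν'_s`. Consequently `ν_s` is symmetric about `1/2` and
`F` pushes `ν_{s+1}` forward to `ν'_s`; in the limit `μ` is symmetric and `F_* μ = μ'`.

Every polynomial is `p = e ∘ F + x · o ∘ F` with `deg e, deg o ≤ deg p / 2`, and symmetry gives
`∫ p² dμ = ∫ (e + o/2)² dμ' + ∫ (γ₁ (y - 1) + 1/4) o² dμ'`, the last weight being positive on
`[0, 1]`. For the minimal monic norms `D_n` this yields `D_{2m} = γ₁^{2m} D'_m` and
`D_{2m+1} ≥ (1/4 - γ₁) γ₁^{2m} D'_m`. As `C² = γ₁ C'`, the numbers `V_n = D_n / C^{2n} = W_n²`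
satisfy `V_{2m} = V'_m` and, because `γ₁, C' ≤ 1/6`, `V_{2m+1} ≥ 2 V'_m`. Induction on `s`
(passing from `γ` to `γ'`) gives `V_{2^s} ≤ V_n` for `2^s ≤ n < 2^{s+1}` and `V_{2^s - 1} ≥ 2^s`.
-/

namespace Polynomial

variable {K : Type*} [Field K] {F : K[X]}

theorem exists_eq_comp_add_X_mul_comp (hF : F.natDegree = 2) (m : ℕ) {p : K[X]}
    (hp : p.natDegree ≤ 2 * m + 1) :
    ∃ e o : K[X], p = e.comp F + X * o.comp F ∧ e.natDegree ≤ m ∧ o.natDegree ≤ m := by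
  induction m generalizing p with
  | zero =>
    refine ⟨C (p.coeff 0), C (p.coeff 1), ?_, by simp, by simp⟩
    rw [C_comp, C_comp, mul_comm X]
    exact eq_X_add_C_of_natDegree_le_one hp |>.trans (add_comm _ _)
  | succ m ih =>
    -- divide by `F` (through its monic multiple `G`) and decompose the quotient
    have hF0 : F ≠ 0 := by rintro rfl; simp at hF
    set G := F * C F.leadingCoeff⁻¹
    have hG : G.Monic := monic_mul_leadingCoeff_inv hF0
    have hGdeg : G.natDegree = 2 := by
      rw [natDegree_mul_C (inv_ne_zero (leadingCoeff_ne_zero.mpr hF0)), hF]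
    obtain ⟨e, o, hq, he, ho⟩ := ih (p := C F.leadingCoeff⁻¹ * (p /ₘ G)) <|
      (natDegree_C_mul_le _ _).trans <| by rw [natDegree_divByMonic _ hG, hGdeg]; omega
    have hr := eq_X_add_C_of_natDegree_le_one (p := p %ₘ G) <| Nat.le_of_lt_succ <|
      (natDegree_modByMonic_lt p hG (by rintro h; simp [h] at hGdeg)).trans_eq hGdeg
    have hdeg : ∀ (a : K) (f : K[X]), f.natDegree ≤ m → (C a + X * f).natDegree ≤ m + 1 :=
      fun a f hf => by
        rw [natDegree_C_add]
        exact natDegree_mul_le.trans (by rw [natDegree_X]; omega)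
    refine ⟨C ((p %ₘ G).coeff 0) + X * e, C ((p %ₘ G).coeff 1) + X * o, ?_,
      hdeg _ _ he, hdeg _ _ ho⟩
    conv_lhs => rw [← modByMonic_add_div p G, hr]
    have hGq : G * (p /ₘ G) = F * (e.comp F + X * o.comp F) := by
      rw [← hq, ← mul_assoc]
    rw [hGq]
    simp only [add_comp, mul_comp, C_comp, X_comp]
    ring

lemma coeff_comp_two_mul (hF : F.natDegree = 2) {e : K[X]} {m : ℕ} (he : e.natDegree ≤ m) :
    (e.comp F).coeff (2 * m) = e.coeff m * F.leadingCoeff ^ m := by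
  rcases he.lt_or_eq with he | rfl
  · rw [coeff_eq_zero_of_natDegree_lt he, zero_mul]
    exact coeff_eq_zero_of_natDegree_lt (by rw [natDegree_comp, hF]; omega)
  · rw [mul_comm, ← hF, coeff_comp_degree_mul_degree (by omega), coeff_natDegree]

lemma coeff_comp_add_X_mul_comp_two_mul_add_one (hF : F.natDegree = 2) {e o : K[X]} {m : ℕ}
    (he : e.natDegree ≤ m) (ho : o.natDegree ≤ m) :
    (e.comp F + X * o.comp F).coeff (2 * m + 1) = o.coeff m * F.leadingCoeff ^ m := by
  rw [coeff_add, coeff_X_mul, coeff_comp_two_mul hF ho,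
    coeff_eq_zero_of_natDegree_lt (by rw [natDegree_comp, hF]; omega), zero_add]

lemma coeff_comp_add_X_mul_comp_two_mul (hF : F.natDegree = 2) {e o : K[X]} {m : ℕ}
    (he : e.natDegree ≤ m) (ho : o.natDegree ≤ m) (hom : o.coeff m = 0) :
    (e.comp F + X * o.comp F).coeff (2 * m) = e.coeff m * F.leadingCoeff ^ m := by
  rw [coeff_add, coeff_comp_two_mul hF he, add_eq_left]
  cases m with
  | zero => exact coeff_X_mul_zero _
  | succ k =>
    have hok : o.natDegree ≤ k := natDegree_le_iff_coeff_eq_zero.mpr fun N hN => by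
      rcases (Nat.succ_le_of_lt hN).eq_or_lt with rfl | hN'
      · exact hom
      · exact coeff_eq_zero_of_natDegree_lt (by omega)
    rw [show 2 * (k + 1) = 2 * k + 1 + 1 by ring, coeff_X_mul]
    exact coeff_eq_zero_of_natDegree_lt (by rw [natDegree_comp, hF]; omega)

end Polynomial

namespace Filter

theorem liminf_comp_two_pow_eq {α : Type*} [CompleteLinearOrder α] {u : ℕ → α}
    (hu : ∀ s n, 2 ^ s ≤ n → n < 2 ^ (s + 1) → u (2 ^ s) ≤ u n) :
    liminf (fun s => u (2 ^ s)) atTop = liminf u atTop := by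
  have hlog : Tendsto (Nat.log 2) atTop atTop :=
    Monotone.tendsto_atTop_atTop (fun _ _ => Nat.log_mono_right) fun b =>
      ⟨2 ^ b, by rw [Nat.log_pow one_lt_two]⟩
  refine le_antisymm ?_ (tendsto_pow_atTop_atTop_of_one_lt one_lt_two).liminf_le_liminf_comp
  refine hlog.liminf_le_liminf_comp.trans (liminf_le_liminf ?_)
  filter_upwards [eventually_ge_atTop 1] with n hn
  exact hu _ n (Nat.pow_log_le_self 2 (by omega)) (Nat.lt_pow_succ_log_self one_lt_two n)

theorem limsup_coe_eq_top_of_tendsto_comp {u : ℕ → ℝ} {φ : ℕ → ℕ} (hφ : Tendsto φ atTop atTop)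
    (hu : Tendsto (u ∘ φ) atTop atTop) : limsup (fun n => (u n : EReal)) atTop = ⊤ :=
  top_le_iff.mp <| (EReal.tendsto_coe_nhds_top_iff.mpr hu).limsup_eq.symm.trans_le
    (hφ.limsup_comp_le_limsup (u := fun n => (u n : EReal)))

end Filter

namespace CantorWidom

noncomputable def minMonicSqNorm (μ : Measure ℝ) (n : ℕ) : ℝ :=
  sInf ((fun p : ℝ[X] => ∫ x, p.eval x ^ 2 ∂μ) '' {p | p.Monic ∧ p.natDegree = n})

section MinMonicSqNorm

variable {μ : Measure ℝ} {n : ℕ}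

lemma minMonicSqNorm_le {p : ℝ[X]} (hp : p.Monic) (hn : p.natDegree = n) :
    minMonicSqNorm μ n ≤ ∫ x, p.eval x ^ 2 ∂μ :=
  csInf_le ⟨0, by rintro _ ⟨q, -, rfl⟩; exact integral_nonneg fun x => sq_nonneg _⟩
    ⟨p, ⟨hp, hn⟩, rfl⟩

lemma le_minMonicSqNorm {c : ℝ}
    (h : ∀ p : ℝ[X], p.Monic → p.natDegree = n → c ≤ ∫ x, p.eval x ^ 2 ∂μ) :
    c ≤ minMonicSqNorm μ n :=
  le_csInf ⟨_, X ^ n, ⟨monic_X_pow n, natDegree_X_pow n⟩, rfl⟩ <| by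
    rintro _ ⟨p, ⟨hp, hn⟩, rfl⟩
    exact h p hp hn

lemma minMonicSqNorm_nonneg : 0 ≤ minMonicSqNorm μ n :=
  le_minMonicSqNorm fun _ _ _ => integral_nonneg fun _ => sq_nonneg _

lemma minMonicSqNorm_zero [IsProbabilityMeasure μ] : minMonicSqNorm μ 0 = 1 := by
  refine le_antisymm (by simpa using minMonicSqNorm_le (μ := μ) monic_one natDegree_one)
    (le_minMonicSqNorm fun p hp hn => ?_)
  rw [hp.natDegree_eq_zero.mp hn]
  simp

lemma coeff_sq_mul_minMonicSqNorm_le {q : ℝ[X]} {m : ℕ} (hq : q.natDegree ≤ m) :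
    q.coeff m ^ 2 * minMonicSqNorm μ m ≤ ∫ x, q.eval x ^ 2 ∂μ := by
  set k := q.coeff m
  rcases eq_or_ne k 0 with hk | hk
  · rw [hk, zero_pow two_ne_zero, zero_mul]
    exact integral_nonneg fun _ => sq_nonneg _
  have hdeg : q.natDegree = m := le_antisymm hq (le_natDegree_of_ne_zero hk)
  have hmonic : (C k⁻¹ * q).Monic :=
    monic_C_mul_of_mul_leadingCoeff_eq_one (by rw [leadingCoeff, hdeg, inv_mul_cancel₀ hk])
  calc k ^ 2 * minMonicSqNorm μ m ≤ k ^ 2 * ∫ x, (C k⁻¹ * q).eval x ^ 2 ∂μ :=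
        mul_le_mul_of_nonneg_left (minMonicSqNorm_le hmonic
          (by rw [natDegree_C_mul (inv_ne_zero hk), hdeg])) (sq_nonneg k)
    _ = ∫ x, q.eval x ^ 2 ∂μ := by
        rw [← integral_const_mul]
        congr 1
        funext x
        rw [eval_mul, eval_C, mul_pow, ← mul_assoc, ← mul_pow, mul_inv_cancel₀ hk, one_pow,
          one_mul]

theorem integral_sq_eq_minMonicSqNorm (hint : ∀ p : ℝ[X], Integrable (fun x => p.eval x) μ)
    {Q : ℝ[X]} (hQ : Q.Monic) (hQn : Q.natDegree = n)
    (horth : ∀ p : ℝ[X], p.degree < n → ∫ x, Q.eval x * p.eval x ∂μ = 0) :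
    ∫ x, Q.eval x ^ 2 ∂μ = minMonicSqNorm μ n := by
  refine le_antisymm (le_minMonicSqNorm fun p hp hpn => ?_) (minMonicSqNorm_le hQ hQn)
  set l := p - Q
  have hpd : p.degree = n := by rw [degree_eq_natDegree hp.ne_zero, hpn]
  have hQd : Q.degree = n := by rw [degree_eq_natDegree hQ.ne_zero, hQn]
  have hl : l.degree < n := hpd ▸ degree_sub_lt_left (hpd.trans hQd.symm) hp.ne_zero
    (by rw [hp.leadingCoeff, hQ.leadingCoeff])
  have hsq : ∀ x, p.eval x ^ 2 = (Q ^ 2).eval x + ((C 2 * (Q * l)).eval x + (l ^ 2).eval x) :=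
    fun x => by simp only [l, eval_pow, eval_mul, eval_C, eval_sub]; ring
  simp_rw [hsq]
  rw [integral_add (hint _) (by exact (hint _).add (hint _)), integral_add (hint _) (hint _)]
  simp only [eval_pow, eval_mul, eval_C]
  rw [integral_const_mul, horth l hl, mul_zero, zero_add]
  have : 0 ≤ ∫ x, l.eval x ^ 2 ∂μ := integral_nonneg fun x => sq_nonneg (l.eval x)
  linarith

end MinMonicSqNorm

def shift (γ : ℕ → ℝ) : ℕ → ℝ := fun k => γ (k + 1)

noncomputable def quadMap (γ : ℕ → ℝ) : ℝ[X] := C (γ 1)⁻¹ * (X ^ 2 - X) + 1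

section Polynomials

variable {γ : ℕ → ℝ}

lemma r_succ_eq (γ : ℕ → ℝ) (s : ℕ) : r γ (s + 1) = γ 1 ^ 2 ^ s * r (shift γ) s := by
  induction s with
  | zero => simp [r]
  | succ s ih => rw [r, ih, r, shift, pow_succ 2 s, pow_mul]; ring

lemma P_succ_eq_comp (hγ : γ 1 ≠ 0) (s : ℕ) :
    P γ (s + 1) = C (γ 1 ^ 2 ^ s) * (P (shift γ) s).comp (quadMap γ) := by
  induction s with
  | zero =>
    simp only [P, r, quadMap, pow_zero, pow_one, sub_comp, X_comp, one_comp, map_one]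
    rw [add_sub_cancel_right, ← mul_assoc, ← C_mul, mul_inv_cancel₀ hγ, C_1]
    ring
  | succ s ih =>
    rw [P, ih, r_succ_eq, P, mul_comp, add_comp, C_comp, pow_succ 2 s, pow_mul]
    simp only [map_mul, map_pow]
    ring

lemma P_add_C_succ_eq_comp (hγ : γ 1 ≠ 0) (s : ℕ) :
    P γ (s + 1) + C (r γ (s + 1) / 2) =
      C (γ 1 ^ 2 ^ s) * (P (shift γ) s + C (r (shift γ) s / 2)).comp (quadMap γ) := by
  rw [P_succ_eq_comp hγ, r_succ_eq, add_comp, C_comp, mul_add, ← C_mul, mul_div_assoc]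

lemma X_sq_eq_quadMap (hγ : γ 1 ≠ 0) : (X ^ 2 : ℝ[X]) = C (γ 1) * (quadMap γ - 1) + X := by
  rw [quadMap, add_sub_cancel_right, ← mul_assoc, ← C_mul, mul_inv_cancel₀ hγ, C_1]
  ring

lemma quadMap_comp_one_sub : (quadMap γ).comp (1 - X) = quadMap γ := by
  simp only [quadMap, add_comp, mul_comp, C_comp, sub_comp, X_pow_comp, X_comp, one_comp]
  ring

lemma quadMap_natDegree (hγ : γ 1 ≠ 0) : (quadMap γ).natDegree = 2 := by
  unfold quadMap
  compute_degree!

lemma quadMap_leadingCoeff (hγ : γ 1 ≠ 0) : (quadMap γ).leadingCoeff = (γ 1)⁻¹ := by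
  rw [leadingCoeff, quadMap_natDegree hγ]
  simp [quadMap, coeff_X, coeff_one]

lemma quadMap_sub_C_eq (hγ : γ 1 ≠ 0) {a y : ℝ} (ha : a * (1 - a) = γ 1 * (1 - y)) :
    quadMap γ - C y = C (γ 1)⁻¹ * ((X - C a) * (X - C (1 - a))) := by
  have hy : C y = 1 - C (γ 1)⁻¹ * C (a * (1 - a)) := by
    rw [ha, ← C_mul, inv_mul_cancel_left₀ hγ, C_sub, C_1, sub_sub_cancel]
  rw [quadMap, hy, C_mul, C_sub, C_1]
  ring

/-- The larger preimage of `y` under `quadMap γ`; the other one is `1 - quadRoot γ y`. -/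
noncomputable def quadRoot (γ : ℕ → ℝ) (y : ℝ) : ℝ := (1 + √(1 - 4 * γ 1 * (1 - y))) / 2

variable {y : ℝ}

lemma quadRoot_mul_one_sub (h4 : γ 1 ≤ 1 / 4) (hy : y ∈ Set.Icc (0 : ℝ) 1) :
    quadRoot γ y * (1 - quadRoot γ y) = γ 1 * (1 - y) := by
  have hd : 0 ≤ 1 - 4 * γ 1 * (1 - y) := by nlinarith [hy.1, hy.2, h4]
  have := Real.sq_sqrt hd
  unfold quadRoot
  linear_combination (-1 / 4 : ℝ) * this

lemma quadRoot_mem_Icc (h0 : 0 ≤ γ 1) (hy : y ∈ Set.Icc (0 : ℝ) 1) :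
    quadRoot γ y ∈ Set.Icc (0 : ℝ) 1 := by
  have h1 : 1 - 4 * γ 1 * (1 - y) ≤ 1 := by nlinarith [hy.1, hy.2]
  have := Real.sqrt_le_one.mpr h1
  have := Real.sqrt_nonneg (1 - 4 * γ 1 * (1 - y))
  constructor <;> unfold quadRoot <;> linarith

end Polynomials

section Nodes

variable {γ : ℕ → ℝ}

lemma P_add_C_succ_eq_prod (hγ : 0 < γ 1 ∧ γ 1 < 1 / 4) {s : ℕ} {m : Multiset ℝ}
    (hcard : Multiset.card m = 2 ^ s) (hm : ∀ y ∈ m, y ∈ Set.Icc (0 : ℝ) 1)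
    (hprod : P (shift γ) s + C (r (shift γ) s / 2) = (m.map fun a => X - C a).prod) :
    P γ (s + 1) + C (r γ (s + 1) / 2) =
      ((m.bind fun y => {quadRoot γ y, 1 - quadRoot γ y}).map fun a => X - C a).prod := by
  have hγ0 : γ 1 ≠ 0 := hγ.1.ne'
  have hfactor : ∀ y ∈ m, (X - C y).comp (quadMap γ) =
      C (γ 1)⁻¹ * ((X - C (quadRoot γ y)) * (X - C (1 - quadRoot γ y))) := fun y hy => by
    rw [sub_comp, X_comp, C_comp]
    exact quadMap_sub_C_eq hγ0 (quadRoot_mul_one_sub hγ.2.le (hm y hy))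
  have hcomp : (m.map fun a => X - C a).map (fun p => p.comp (quadMap γ)) =
      m.map fun y => C (γ 1)⁻¹ * ((X - C (quadRoot γ y)) * (X - C (1 - quadRoot γ y))) := by
    rw [Multiset.map_map]
    exact Multiset.map_congr rfl hfactor
  rw [P_add_C_succ_eq_comp hγ0, hprod, multiset_prod_comp, hcomp, Multiset.prod_map_mul,
    Multiset.map_const', Multiset.prod_replicate, hcard, ← mul_assoc, ← C_pow, ← C_mul, ← mul_pow,
    mul_inv_cancel₀ hγ0, one_pow, C_1, one_mul, Multiset.map_bind, Multiset.prod_bind]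
  simp [Multiset.insert_eq_cons]

lemma exists_P_add_C_eq_prod (hγ : ∀ s, 0 < γ (s + 1) ∧ γ (s + 1) < 1 / 4) (s : ℕ) :
    ∃ m : Multiset ℝ, Multiset.card m = 2 ^ s ∧ (∀ x ∈ m, x ∈ Set.Icc (0 : ℝ) 1) ∧
      P γ s + C (r γ s / 2) = (m.map fun a => X - C a).prod := by
  induction s generalizing γ with
  | zero =>
    refine ⟨{1 / 2}, rfl, by norm_num, ?_⟩
    simp only [P, r, Multiset.map_singleton, Multiset.prod_singleton]
    rw [sub_add, ← C_1, ← C_sub]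
    norm_num
  | succ s ih =>
    obtain ⟨m, hcard, hm, hprod⟩ := ih (γ := shift γ) fun k => hγ (k + 1)
    refine ⟨m.bind fun y => {quadRoot γ y, 1 - quadRoot γ y}, ?_, ?_,
      P_add_C_succ_eq_prod (hγ 0) hcard hm hprod⟩
    · simp [Multiset.insert_eq_cons, hcard, pow_succ', two_mul]
    · intro x hx
      obtain ⟨y, hy, hxy⟩ := Multiset.mem_bind.mp hx
      have hroot := quadRoot_mem_Icc (hγ 0).1.le (hm y hy)
      simp only [Multiset.insert_eq_cons, Multiset.mem_cons, Multiset.mem_singleton] at hxy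
      rcases hxy with rfl | rfl
      · exact hroot
      · exact ⟨by linarith [hroot.2], by linarith [hroot.1]⟩

/-- The atoms of `ν_s`, with multiplicity. -/
noncomputable def nodes (γ : ℕ → ℝ) (s : ℕ) : Multiset ℝ := (P γ s + C (r γ s / 2)).roots

lemma nodes_zero : nodes γ 0 = {1 / 2} := by
  rw [nodes, P, r, sub_add, ← C_1, ← C_sub, roots_X_sub_C]
  norm_num

lemma quadMap_eval_quadRoot (hγ : 0 < γ 1 ∧ γ 1 < 1 / 4) {y : ℝ} (hy : y ∈ Set.Icc (0 : ℝ) 1) :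
    (quadMap γ).eval (quadRoot γ y) = y ∧ (quadMap γ).eval (1 - quadRoot γ y) = y := by
  have hfactor := quadMap_sub_C_eq hγ.1.ne' (quadRoot_mul_one_sub hγ.2.le hy)
  have h := congrArg (eval (quadRoot γ y)) hfactor
  have h' := congrArg (eval (1 - quadRoot γ y)) hfactor
  simp only [eval_sub, eval_C, eval_mul, eval_X, sub_self, mul_zero, zero_mul] at h h'
  exact ⟨sub_eq_zero.mp h, sub_eq_zero.mp h'⟩

variable (hγ : ∀ s, 0 < γ (s + 1) ∧ γ (s + 1) < 1 / 4)
include hγ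

lemma mem_Icc_of_mem_nodes {s : ℕ} {x : ℝ} (hx : x ∈ nodes γ s) : x ∈ Set.Icc (0 : ℝ) 1 := by
  obtain ⟨m, -, hm, hprod⟩ := exists_P_add_C_eq_prod hγ s
  rw [nodes, hprod, roots_multiset_prod_X_sub_C] at hx
  exact hm x hx

lemma nodes_succ (s : ℕ) :
    nodes γ (s + 1) = (nodes (shift γ) s).bind fun y => {quadRoot γ y, 1 - quadRoot γ y} := by
  obtain ⟨m, hcard, hm, hprod⟩ :=
    exists_P_add_C_eq_prod (γ := shift γ) (fun k => hγ (k + 1)) s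
  rw [nodes, nodes, P_add_C_succ_eq_prod (hγ 0) hcard hm hprod, hprod,
    roots_multiset_prod_X_sub_C, roots_multiset_prod_X_sub_C]

lemma map_one_sub_nodes (s : ℕ) : (nodes γ s).map (fun x => 1 - x) = nodes γ s := by
  cases s with
  | zero => rw [nodes_zero]; norm_num
  | succ s =>
    rw [nodes_succ hγ, Multiset.map_bind]
    congr 1
    funext y
    simp only [Multiset.insert_eq_cons, Multiset.map_cons, Multiset.map_singleton, sub_sub_cancel]
    exact Multiset.pair_comm _ _

lemma map_quadMap_nodes_succ (s : ℕ) :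
    (nodes γ (s + 1)).map (quadMap γ).eval = nodes (shift γ) s + nodes (shift γ) s := by
  rw [nodes_succ hγ, Multiset.map_bind]
  calc _ = (nodes (shift γ) s).bind fun y => {y} + {y} := by
        refine Multiset.bind_congr fun y hy => ?_
        obtain ⟨h1, h2⟩ := quadMap_eval_quadRoot (hγ 0)
          (mem_Icc_of_mem_nodes (γ := shift γ) (fun k => hγ (k + 1)) hy)
        simp [Multiset.insert_eq_cons, h1, h2, Multiset.singleton_add]
    _ = _ := by rw [Multiset.bind_add, Multiset.bind_singleton, Multiset.map_id']

end Nodes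

section NuInt

variable {γ : ℕ → ℝ} (hγ : ∀ s, 0 < γ (s + 1) ∧ γ (s + 1) < 1 / 4)
include hγ

lemma nuInt_nonneg {s : ℕ} {f : ℝ → ℝ} (hf : ∀ x ∈ Set.Icc (0 : ℝ) 1, 0 ≤ f x) :
    0 ≤ nuInt γ s f := by
  refine div_nonneg (Multiset.sum_nonneg fun _ hx => ?_) (by positivity)
  obtain ⟨y, hy, rfl⟩ := Multiset.mem_map.mp hx
  exact hf y (mem_Icc_of_mem_nodes hγ hy)

lemma nuInt_comp_one_sub (s : ℕ) (f : ℝ → ℝ) :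
    nuInt γ s (fun x => f (1 - x)) = nuInt γ s f := by
  change ((nodes γ s).map _).sum / _ = ((nodes γ s).map f).sum / _
  rw [show (fun x => f (1 - x)) = f ∘ fun x => 1 - x from rfl, ← Multiset.map_map,
    map_one_sub_nodes hγ]

lemma nuInt_succ_comp_quadMap (s : ℕ) (g : ℝ → ℝ) :
    nuInt γ (s + 1) (fun x => g ((quadMap γ).eval x)) = nuInt (shift γ) s g := by
  change ((nodes γ (s + 1)).map _).sum / _ = ((nodes (shift γ) s).map g).sum / _
  rw [show (fun x => g ((quadMap γ).eval x)) = g ∘ (quadMap γ).eval from rfl, ← Multiset.map_map,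
    map_quadMap_nodes_succ hγ, Multiset.map_add, Multiset.sum_add,
    pow_succ]
  field_simp
  ring

end NuInt

lemma integral_eval_comp (μ : Measure ℝ) (p q : ℝ[X]) :
    ∫ x, (p.comp q).eval x ∂μ = ∫ y, p.eval y ∂μ.map q.eval := by
  rw [integral_map q.continuous.aemeasurable p.continuous.aestronglyMeasurable]
  simp only [eval_comp]

structure IsCantorLimit (γ : ℕ → ℝ) (μ : Measure ℝ) : Prop where
  gamma_mem : ∀ s, 0 < γ (s + 1) ∧ γ (s + 1) < 1 / 4
  isProbabilityMeasure : IsProbabilityMeasure μ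
  integrable : ∀ p : ℝ[X], Integrable (fun x => p.eval x) μ
  tendsto_nuInt : ∀ p : ℝ[X],
    Tendsto (fun s => nuInt γ s fun x => p.eval x) atTop (nhds (∫ x, p.eval x ∂μ))

namespace IsCantorLimit

variable {γ : ℕ → ℝ} {μ : Measure ℝ} (h : IsCantorLimit γ μ)
include h

lemma integral_nonneg_of_nonneg_on_Icc {p : ℝ[X]} (hp : ∀ x ∈ Set.Icc (0 : ℝ) 1, 0 ≤ p.eval x) :
    0 ≤ ∫ x, p.eval x ∂μ :=
  ge_of_tendsto' (h.tendsto_nuInt p) fun _ => nuInt_nonneg h.gamma_mem hp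

lemma integral_comp_one_sub (p : ℝ[X]) :
    ∫ x, (p.comp (1 - X)).eval x ∂μ = ∫ x, p.eval x ∂μ := by
  have hnu : (fun s => nuInt γ s fun x => (p.comp (1 - X)).eval x) =
      fun s => nuInt γ s fun x => p.eval x :=
    funext fun s => by simpa [eval_comp] using nuInt_comp_one_sub h.gamma_mem s fun x => p.eval x
  exact tendsto_nhds_unique (h.tendsto_nuInt _) (hnu ▸ h.tendsto_nuInt p)

lemma map_quadMap : IsCantorLimit (shift γ) (μ.map (quadMap γ).eval) where
  gamma_mem s := h.gamma_mem (s + 1)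
  isProbabilityMeasure :=
    have := h.isProbabilityMeasure
    Measure.isProbabilityMeasure_map (quadMap γ).continuous.aemeasurable
  integrable p := by
    rw [integrable_map_measure p.continuous.aestronglyMeasurable
      (quadMap γ).continuous.aemeasurable]
    simpa [Function.comp_def, eval_comp] using h.integrable (p.comp (quadMap γ))
  tendsto_nuInt p := by
    have hnu : (fun s => nuInt γ (s + 1) fun x => (p.comp (quadMap γ)).eval x) =
        fun s => nuInt (shift γ) s fun x => p.eval x :=
      funext fun s => by
        simpa [eval_comp] using nuInt_succ_comp_quadMap h.gamma_mem s fun x => p.eval x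
    rw [← integral_eval_comp, ← hnu]
    exact (h.tendsto_nuInt (p.comp (quadMap γ))).comp (tendsto_add_atTop_nat 1)

lemma integral_X_mul_comp_quadMap (p : ℝ[X]) :
    ∫ x, (X * p.comp (quadMap γ)).eval x ∂μ = 1 / 2 * ∫ y, p.eval y ∂μ.map (quadMap γ).eval := by
  set g := p.comp (quadMap γ)
  have hsymm : (X * g).comp (1 - X) = g - X * g := by
    rw [mul_comp, X_comp, comp_assoc, quadMap_comp_one_sub]
    ring
  have := h.integral_comp_one_sub (X * g)
  simp only [hsymm, eval_sub] at this
  rw [integral_sub (h.integrable g) (h.integrable _), integral_eval_comp] at this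
  linarith

lemma integral_mono_on_Icc {p q : ℝ[X]} (hpq : ∀ x ∈ Set.Icc (0 : ℝ) 1, p.eval x ≤ q.eval x) :
    ∫ x, p.eval x ∂μ ≤ ∫ x, q.eval x ∂μ := by
  have := h.integral_nonneg_of_nonneg_on_Icc (p := q - p) fun x hx => by
    simpa using hpq x hx
  simp only [eval_sub] at this
  rw [integral_sub (h.integrable q) (h.integrable p)] at this
  linarith

lemma integral_comp_add_X_mul_comp (a b : ℝ[X]) :
    ∫ x, (a.comp (quadMap γ) + X * b.comp (quadMap γ)).eval x ∂μ =
      ∫ y, (a + C (1 / 2) * b).eval y ∂μ.map (quadMap γ).eval := by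
  simp only [eval_add, eval_C_mul]
  rw [integral_add (h.integrable _) (h.integrable _), integral_eval_comp,
    h.integral_X_mul_comp_quadMap, integral_add (h.map_quadMap.integrable _)
    (by exact (h.map_quadMap.integrable b).const_mul _), integral_const_mul]

lemma integral_sq_comp_add_X_mul_comp (e o : ℝ[X]) :
    ∫ x, (e.comp (quadMap γ) + X * o.comp (quadMap γ)).eval x ^ 2 ∂μ =
      ∫ y, ((e + C (1 / 2) * o) ^ 2 + (C (γ 1) * (X - 1) + C (1 / 4)) * o ^ 2).eval y
        ∂μ.map (quadMap γ).eval := by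
  have hsq : (e.comp (quadMap γ) + X * o.comp (quadMap γ)) ^ 2 =
      (e ^ 2 + C (γ 1) * (X - 1) * o ^ 2).comp (quadMap γ) +
        X * (2 * e * o + o ^ 2).comp (quadMap γ) := by
    simp only [add_comp, mul_comp, pow_comp, C_comp, X_comp, sub_comp, one_comp, ofNat_comp]
    linear_combination (o.comp (quadMap γ)) ^ 2 * X_sq_eq_quadMap (h.gamma_mem 0).1.ne'
  simp_rw [← eval_pow, hsq, h.integral_comp_add_X_mul_comp]
  congr 1
  funext y
  simp only [eval_add, eval_mul, eval_pow, eval_C, eval_X, eval_sub, eval_one, eval_ofNat]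
  ring

lemma minMonicSqNorm_two_mul_le (m : ℕ) :
    minMonicSqNorm μ (2 * m) ≤ γ 1 ^ (2 * m) * minMonicSqNorm (μ.map (quadMap γ).eval) m := by
  have hγ0 : γ 1 ≠ 0 := (h.gamma_mem 0).1.ne'
  have hpos : 0 < γ 1 ^ (2 * m) := pow_pos (h.gamma_mem 0).1 _
  rw [← div_le_iff₀' hpos]
  refine le_minMonicSqNorm fun p hp hpn => ?_
  rw [div_le_iff₀' hpos]
  set q := C (γ 1 ^ m) * p.comp (quadMap γ)
  have hF : (quadMap γ).natDegree ≠ 0 := by rw [quadMap_natDegree hγ0]; omega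
  have hq : q.Monic := by
    rw [Monic, leadingCoeff_mul, leadingCoeff_C, leadingCoeff_comp hF, hp.leadingCoeff,
      quadMap_leadingCoeff hγ0, hpn, one_mul, ← mul_pow, mul_inv_cancel₀ hγ0, one_pow]
  have hqn : q.natDegree = 2 * m := by
    rw [natDegree_C_mul (pow_ne_zero _ hγ0), natDegree_comp, hpn, quadMap_natDegree hγ0, mul_comm]
  have hqsq : ∀ x, q.eval x ^ 2 = γ 1 ^ (2 * m) * ((p ^ 2).comp (quadMap γ)).eval x := fun x => by
    simp only [q, eval_mul, eval_C, eval_comp, eval_pow]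
    ring
  calc minMonicSqNorm μ (2 * m) ≤ ∫ x, q.eval x ^ 2 ∂μ := minMonicSqNorm_le hq hqn
    _ = _ := by simp_rw [hqsq, integral_const_mul, integral_eval_comp, eval_pow]

lemma le_minMonicSqNorm_two_mul (m : ℕ) :
    γ 1 ^ (2 * m) * minMonicSqNorm (μ.map (quadMap γ).eval) m ≤ minMonicSqNorm μ (2 * m) := by
  have hγ0 : γ 1 ≠ 0 := (h.gamma_mem 0).1.ne'
  have hF := quadMap_natDegree hγ0
  refine le_minMonicSqNorm fun p hp hpn => ?_
  obtain ⟨e, o, rfl, he, ho⟩ := exists_eq_comp_add_X_mul_comp hF m (p := p) (by omega)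
  have hom : o.coeff m = 0 := by
    have := coeff_comp_add_X_mul_comp_two_mul_add_one hF he ho
    rw [coeff_eq_zero_of_natDegree_lt (by omega), eq_comm, mul_eq_zero] at this
    rw [quadMap_leadingCoeff hγ0] at this
    exact this.resolve_right (pow_ne_zero _ (inv_ne_zero hγ0))
  have hem : e.coeff m = γ 1 ^ m := by
    have := coeff_comp_add_X_mul_comp_two_mul hF he ho hom
    rw [← hpn, hp.coeff_natDegree, quadMap_leadingCoeff hγ0, inv_pow, eq_comm,
      mul_inv_eq_one₀ (pow_ne_zero _ hγ0)] at this
    exact this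
  have hq : (e + C (1 / 2) * o).coeff m = γ 1 ^ m := by
    rw [coeff_add, coeff_C_mul, hem, hom, mul_zero, add_zero]
  have hqdeg : (e + C (1 / 2) * o).natDegree ≤ m :=
    natDegree_add_le_of_degree_le he ((natDegree_C_mul_le _ _).trans ho)
  calc γ 1 ^ (2 * m) * minMonicSqNorm (μ.map (quadMap γ).eval) m
      = (e + C (1 / 2) * o).coeff m ^ 2 * minMonicSqNorm (μ.map (quadMap γ).eval) m := by
        rw [hq, ← pow_mul, mul_comm m]
    _ ≤ ∫ y, (e + C (1 / 2) * o).eval y ^ 2 ∂μ.map (quadMap γ).eval :=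
        coeff_sq_mul_minMonicSqNorm_le hqdeg
    _ ≤ _ := by
        simp_rw [← eval_pow]
        refine h.map_quadMap.integral_mono_on_Icc fun y hy => ?_
        have : 0 ≤ γ 1 * (y - 1) + 1 / 4 := by nlinarith [hy.1, hy.2, h.gamma_mem 0]
        simp only [eval_add, eval_mul, eval_pow, eval_C, eval_X, eval_sub, eval_one]
        nlinarith [mul_nonneg this (sq_nonneg (o.eval y))]
    _ = _ := (h.integral_sq_comp_add_X_mul_comp e o).symm

lemma le_minMonicSqNorm_two_mul_add_one (m : ℕ) :
    (1 / 4 - γ 1) * (γ 1 ^ (2 * m) * minMonicSqNorm (μ.map (quadMap γ).eval) m) ≤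
      minMonicSqNorm μ (2 * m + 1) := by
  have hγ0 : γ 1 ≠ 0 := (h.gamma_mem 0).1.ne'
  have hF := quadMap_natDegree hγ0
  refine le_minMonicSqNorm fun p hp hpn => ?_
  obtain ⟨e, o, rfl, he, ho⟩ := exists_eq_comp_add_X_mul_comp hF m (p := p) hpn.le
  have hom : o.coeff m = γ 1 ^ m := by
    have := coeff_comp_add_X_mul_comp_two_mul_add_one hF he ho
    rw [← hpn, hp.coeff_natDegree, quadMap_leadingCoeff hγ0, inv_pow, eq_comm,
      mul_inv_eq_one₀ (pow_ne_zero _ hγ0)] at this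
    exact this
  calc (1 / 4 - γ 1) * (γ 1 ^ (2 * m) * minMonicSqNorm (μ.map (quadMap γ).eval) m)
      ≤ (1 / 4 - γ 1) * ∫ y, o.eval y ^ 2 ∂μ.map (quadMap γ).eval := by
        refine mul_le_mul_of_nonneg_left ?_ (by linarith [h.gamma_mem 0])
        simpa [hom, ← pow_mul, mul_comm m] using
          coeff_sq_mul_minMonicSqNorm_le (μ := μ.map (quadMap γ).eval) ho
    _ = ∫ y, (C (1 / 4 - γ 1) * o ^ 2).eval y ∂μ.map (quadMap γ).eval := by
        simp only [eval_C_mul, eval_pow, integral_const_mul]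
    _ ≤ _ := by
        refine h.map_quadMap.integral_mono_on_Icc fun y hy => ?_
        simp only [eval_add, eval_mul, eval_pow, eval_C, eval_X, eval_sub, eval_one]
        nlinarith [mul_nonneg (mul_nonneg (h.gamma_mem 0).1.le hy.1) (sq_nonneg (o.eval y)),
          sq_nonneg ((e + C (1 / 2) * o).eval y)]
    _ = _ := (h.integral_sq_comp_add_X_mul_comp e o).symm

end IsCantorLimit

noncomputable def capacity (γ : ℕ → ℝ) : ℝ :=
  Real.exp (∑' k : ℕ, (1 / 2 : ℝ) ^ (k + 1) * Real.log (γ (k + 1)))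

lemma capacity_pos (γ : ℕ → ℝ) : 0 < capacity γ := Real.exp_pos _

section Capacity

variable {γ : ℕ → ℝ}
  (hsum : Summable fun k : ℕ => (1 / 2 : ℝ) ^ (k + 1) * Real.log (γ (k + 1)))
include hsum

lemma summable_shift :
    Summable fun k : ℕ => (1 / 2 : ℝ) ^ (k + 1) * Real.log (shift γ (k + 1)) := by
  refine ((summable_nat_add_iff 1).mpr hsum |>.mul_left 2).congr fun k => ?_
  simp only [shift, pow_succ]
  ring

lemma capacity_sq (hγ : 0 < γ 1) : capacity γ ^ 2 = γ 1 * capacity (shift γ) := by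
  have hsum' : Summable fun k : ℕ => (1 / 2 : ℝ) ^ k * Real.log (γ (k + 1)) :=
    (hsum.mul_left 2).congr fun k => by rw [pow_succ]; ring
  have htwice : 2 * ∑' k : ℕ, (1 / 2 : ℝ) ^ (k + 1) * Real.log (γ (k + 1)) =
      Real.log (γ 1) + ∑' k : ℕ, (1 / 2 : ℝ) ^ (k + 1) * Real.log (shift γ (k + 1)) := by
    calc _ = ∑' k : ℕ, (1 / 2 : ℝ) ^ k * Real.log (γ (k + 1)) := by
          rw [← tsum_mul_left]
          exact tsum_congr fun k => by rw [pow_succ]; ring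
      _ = _ := by
          rw [hsum'.tsum_eq_zero_add]
          simp [shift]
  rw [capacity, capacity, ← Real.exp_nat_mul, Nat.cast_two, htwice, Real.exp_add, Real.exp_log hγ]

lemma capacity_le (hγ : ∀ s, 0 < γ (s + 1)) {c : ℝ} (hc : 0 < c) (hγc : ∀ s, γ (s + 1) ≤ c) :
    capacity γ ≤ c := by
  have hgeom : HasSum (fun k : ℕ => (1 / 2 : ℝ) ^ (k + 1)) 1 := by
    simpa [pow_succ] using (hasSum_geometric_two.mul_right (1 / 2 : ℝ))
  calc capacity γ ≤ Real.exp (∑' k : ℕ, (1 / 2 : ℝ) ^ (k + 1) * Real.log c) :=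
        Real.exp_le_exp.mpr <| hsum.tsum_le_tsum (fun k => mul_le_mul_of_nonneg_left
          (Real.log_le_log (hγ k) (hγc k)) (by positivity)) (hgeom.summable.mul_right _)
    _ = c := by rw [tsum_mul_right, hgeom.tsum_eq, one_mul, Real.exp_log hc]

end Capacity

/-- `W_n²`, written with the minimal monic norm in place of `‖Q_n‖²`. -/
noncomputable def widomSq (γ : ℕ → ℝ) (μ : Measure ℝ) (n : ℕ) : ℝ :=
  minMonicSqNorm μ n / capacity γ ^ (2 * n)

lemma widomSq_nonneg (γ : ℕ → ℝ) (μ : Measure ℝ) (n : ℕ) : 0 ≤ widomSq γ μ n :=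
  div_nonneg minMonicSqNorm_nonneg (pow_nonneg (capacity_pos γ).le _)

namespace IsCantorLimit

variable {γ : ℕ → ℝ} {μ : Measure ℝ} (h : IsCantorLimit γ μ)
  (hsum : Summable fun k : ℕ => (1 / 2 : ℝ) ^ (k + 1) * Real.log (γ (k + 1)))
include h hsum

lemma widomSq_two_mul (m : ℕ) :
    widomSq γ μ (2 * m) = widomSq (shift γ) (μ.map (quadMap γ).eval) m := by
  have hγ := (h.gamma_mem 0).1
  rw [widomSq, widomSq,
    le_antisymm (h.minMonicSqNorm_two_mul_le m) (h.le_minMonicSqNorm_two_mul m),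
    pow_mul (capacity γ), capacity_sq hsum hγ, mul_pow, mul_div_mul_left _ _ (pow_ne_zero _ hγ.ne')]

lemma two_mul_widomSq_le (h6 : ∀ s, γ (s + 1) ≤ 1 / 6) (m : ℕ) :
    2 * widomSq (shift γ) (μ.map (quadMap γ).eval) m ≤ widomSq γ μ (2 * m + 1) := by
  have hγ := (h.gamma_mem 0).1
  have hc : capacity (shift γ) ≤ 1 / 6 := capacity_le (summable_shift hsum)
    (fun s => (h.gamma_mem (s + 1)).1) (by norm_num) fun s => h6 (s + 1)
  have hcpos := capacity_pos (shift γ)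
  have hD := minMonicSqNorm_nonneg (μ := μ.map (quadMap γ).eval) (n := m)
  have hcap : capacity γ ^ (2 * (2 * m + 1)) =
      γ 1 * capacity (shift γ) * (γ 1 ^ (2 * m) * capacity (shift γ) ^ (2 * m)) := by
    rw [pow_mul, capacity_sq hsum hγ, pow_succ, mul_pow]
    ring
  rw [widomSq, widomSq, hcap, le_div_iff₀ (by positivity)]
  calc 2 * (minMonicSqNorm (μ.map (quadMap γ).eval) m / capacity (shift γ) ^ (2 * m)) *
        (γ 1 * capacity (shift γ) * (γ 1 ^ (2 * m) * capacity (shift γ) ^ (2 * m)))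
      = 2 * γ 1 * capacity (shift γ) *
          (γ 1 ^ (2 * m) * minMonicSqNorm (μ.map (quadMap γ).eval) m) := by
        field_simp
    _ ≤ (1 / 4 - γ 1) * (γ 1 ^ (2 * m) * minMonicSqNorm (μ.map (quadMap γ).eval) m) :=
        -- `2 γ₁ C' ≤ γ₁ / 3 ≤ 1/4 - γ₁` because `γ₁, C' ≤ 1/6`
        mul_le_mul_of_nonneg_right (by nlinarith [h6 0]) (by positivity)
    _ ≤ minMonicSqNorm μ (2 * m + 1) := h.le_minMonicSqNorm_two_mul_add_one m

theorem widomSq_two_pow_le (h6 : ∀ s, γ (s + 1) ≤ 1 / 6) {s n : ℕ} (hn : 2 ^ s ≤ n)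
    (hn' : n < 2 ^ (s + 1)) :
    widomSq γ μ (2 ^ s) ≤ widomSq γ μ n := by
  induction s generalizing γ μ n with
  | zero =>
    obtain rfl : n = 1 := by simp at hn hn'; omega
    simp
  | succ s ih =>
    have ih' := @ih _ _ h.map_quadMap (summable_shift hsum) fun k => h6 (k + 1)
    have hpow := pow_succ' 2 s
    have hpow' := pow_succ' 2 (s + 1)
    rw [hpow, h.widomSq_two_mul hsum]
    obtain ⟨m, rfl | rfl⟩ := Nat.even_or_odd' n
    · rw [h.widomSq_two_mul hsum]
      exact ih' (by omega) (by omega)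
    · calc _ ≤ widomSq (shift γ) (μ.map (quadMap γ).eval) m := ih' (by omega) (by omega)
        _ ≤ 2 * widomSq (shift γ) (μ.map (quadMap γ).eval) m :=
          le_mul_of_one_le_left (widomSq_nonneg _ _ _) one_le_two
        _ ≤ _ := h.two_mul_widomSq_le hsum h6 m

theorem two_pow_le_widomSq (h6 : ∀ s, γ (s + 1) ≤ 1 / 6) (s : ℕ) :
    (2 : ℝ) ^ s ≤ widomSq γ μ (2 ^ s - 1) := by
  induction s generalizing γ μ with
  | zero =>
    have := h.isProbabilityMeasure
    simp [widomSq, minMonicSqNorm_zero]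
  | succ s ih =>
    have hpow : 2 ^ (s + 1) - 1 = 2 * (2 ^ s - 1) + 1 := by
      have := Nat.one_le_two_pow (n := s)
      rw [pow_succ]
      omega
    rw [hpow, pow_succ']
    exact (mul_le_mul_of_nonneg_left (ih h.map_quadMap (summable_shift hsum)
      fun k => h6 (k + 1)) zero_le_two).trans (h.two_mul_widomSq_le hsum h6 _)

end IsCantorLimit

end CantorWidom

theorem stmt_19_general (γ : ℕ → ℝ) (hγ : ∀ s : ℕ, 0 < γ (s + 1) ∧ γ (s + 1) < 1 / 4)
    (hcap : Summable fun k : ℕ => (1 / 2 : ℝ) ^ (k + 1) * Real.log (1 / γ (k + 1)))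
    (hγ6 : ∀ s : ℕ, γ (s + 1) ≤ 1 / 6)
    (μ : Measure ℝ) [IsProbabilityMeasure μ]
    (hμint : ∀ p : Polynomial ℝ, Integrable (fun x => p.eval x) μ)
    (hμconv : ∀ p : Polynomial ℝ,
      Tendsto (fun s => nuInt γ s (fun x => p.eval x)) atTop (nhds (∫ x, p.eval x ∂μ)))
    (Q : ℕ → Polynomial ℝ) (hQmonic : ∀ n, (Q n).Monic) (hQdeg : ∀ n, (Q n).natDegree = n)
    (hQorth : ∀ n : ℕ, ∀ p : Polynomial ℝ, p.degree < (n : WithBot ℕ) →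
      ∫ x, (Q n).eval x * p.eval x ∂μ = 0)
    :
    (∀ s n : ℕ, 2 ^ s ≤ n → n < 2 ^ (s + 1) → widomW γ μ Q (2 ^ s) ≤ widomW γ μ Q n) ∧
    Filter.liminf (fun s => (widomW γ μ Q (2 ^ s) : EReal)) Filter.atTop =
      Filter.liminf (fun n => (widomW γ μ Q n : EReal)) Filter.atTop ∧
    Filter.limsup (fun n => (widomW γ μ Q n : EReal)) Filter.atTop = ⊤ := by
  have h : CantorWidom.IsCantorLimit γ μ := ⟨hγ, inferInstance, hμint, hμconv⟩
  have hsum : Summable fun k : ℕ => (1 / 2 : ℝ) ^ (k + 1) * Real.log (γ (k + 1)) :=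
    hcap.neg.congr fun k => by simp only [one_div, Real.log_inv]; ring
  have hW : ∀ n, widomW γ μ Q n = √(CantorWidom.widomSq γ μ n) := fun n => by
    rw [CantorWidom.widomSq, Real.sqrt_div CantorWidom.minMonicSqNorm_nonneg, pow_mul',
      Real.sqrt_sq (pow_nonneg (CantorWidom.capacity_pos γ).le _),
      ← CantorWidom.integral_sq_eq_minMonicSqNorm hμint (hQmonic n) (hQdeg n) (hQorth n)]
    rfl
  have hmin : ∀ s n : ℕ, 2 ^ s ≤ n → n < 2 ^ (s + 1) → widomW γ μ Q (2 ^ s) ≤ widomW γ μ Q n :=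
    fun s n h1 h2 => by
      rw [hW, hW]
      exact Real.sqrt_le_sqrt (h.widomSq_two_pow_le hsum hγ6 h1 h2)
  refine ⟨hmin, liminf_comp_two_pow_eq (u := fun n => (widomW γ μ Q n : EReal))
    fun s n h1 h2 => EReal.coe_le_coe_iff.mpr (hmin s n h1 h2),
    limsup_coe_eq_top_of_tendsto_comp (φ := fun s => 2 ^ s - 1) ?_ ?_⟩
  · exact tendsto_atTop_mono (fun s => show s ≤ 2 ^ s - 1 by
      have := Nat.lt_two_pow_self (n := s); omega) tendsto_id
  · refine tendsto_atTop_mono (fun s => ?_) (Real.tendsto_sqrt_atTop.comp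
      (tendsto_pow_atTop_atTop_of_one_lt one_lt_two))
    rw [Function.comp_apply, Function.comp_apply, hW]
    exact Real.sqrt_le_sqrt (h.two_pow_le_widomSq hsum hγ6 s)

theorem stmt_19 (γ : ℕ → ℝ) (hγ : ∀ s : ℕ, 0 < γ (s + 1) ∧ γ (s + 1) < 1 / 4)
    (hcap : Summable fun k : ℕ => (1 / 2 : ℝ) ^ (k + 1) * Real.log (1 / γ (k + 1)))
    (hγ6 : ∀ s : ℕ, γ (s + 1) ≤ 1 / 6)
    (μ : Measure ℝ) [IsProbabilityMeasure μ]
    (hμint : ∀ p : Polynomial ℝ, Integrable (fun x => p.eval x) μ)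
    (hμpos : ∀ p : Polynomial ℝ, p ≠ 0 → 0 < ∫ x, (p.eval x) ^ 2 ∂μ)
    (hμconv : ∀ p : Polynomial ℝ,
      Tendsto (fun s => nuInt γ s (fun x => p.eval x)) atTop (nhds (∫ x, p.eval x ∂μ)))
    (Q : ℕ → Polynomial ℝ) (hQmonic : ∀ n, (Q n).Monic) (hQdeg : ∀ n, (Q n).natDegree = n)
    (hQorth : ∀ n : ℕ, ∀ p : Polynomial ℝ, p.degree < (n : WithBot ℕ) →
      ∫ x, (Q n).eval x * p.eval x ∂μ = 0)
    :
    (∀ s n : ℕ, 2 ^ s ≤ n → n < 2 ^ (s + 1) → widomW γ μ Q (2 ^ s) ≤ widomW γ μ Q n) ∧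
    Filter.liminf (fun s => (widomW γ μ Q (2 ^ s) : EReal)) Filter.atTop =
      Filter.liminf (fun n => (widomW γ μ Q n : EReal)) Filter.atTop ∧
    Filter.limsup (fun n => (widomW γ μ Q n : EReal)) Filter.atTop = ⊤ :=
  stmt_19_general γ hγ hcap hγ6 μ hμint hμconv Q hQmonic hQdeg hQorth
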